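/- The ı-canonical basis elements admit the closed formula: for every n ≥ 0, [n]!·B·Pₙ = B^{1+σ_t(n)}·∏_{0 ≤ k ≤ n−1, k ≡ t (mod 2)} (B² − [k]²) in Uⁱ, where σ_t(n) := 0 if n is even, σ_t(n) := −1 if n is odd and t = 0, and σ_t(n) := 1 if n is odd and t = 1 (so 1 + σ_t(n) ∈ {0,1,2}). -/
import Mathlib


/-!
Setting: `K = ℚ(q)` is the field of rational functions over `ℚ`; `U⁻ = ℚ(q)[F]` and
`Uⁱ = ℚ(q)[B]` are both realized as `Polynomial K`, with `F` resp. `B` the variable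
`Polynomial.X`.
-/

noncomputable section

abbrev K : Type := RatFunc ℚ

/-- The variable `q` of `ℚ(q)`. -/
def q : K := RatFunc.X

/-- The quantum integer `[n] = (qⁿ - q⁻ⁿ)/(q - q⁻¹)`. -/
def qint (n : ℕ) : K := (q ^ n - q⁻¹ ^ n) / (q - q⁻¹)

/-- The quantum factorial `[n]! = [1][2]⋯[n]`, `[0]! = 1`. -/
def qfact : ℕ → K
  | 0 => 1
  | n + 1 => qfact n * qint (n + 1)

/-- The ı-canonical basis elements `Pₙ ∈ Uⁱ` (for the parameter `t ∈ {0,1}`): `P₀ = 1` and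
`[n+1]·P_{n+1} = B·Pₙ − δ_{n≡t}·[n]·P_{n−1}` for `n ≥ 0`, interpreting `P₋₁ = 0`
(for `n = 0` the last term vanishes as `[0] = 0`). -/
def Pel (t : ℕ) : ℕ → Polynomial K
  | 0 => 1
  | 1 => (qint 1)⁻¹ • (Polynomial.X : Polynomial K)
  | n + 2 => (qint (n + 2))⁻¹ •
      (Polynomial.X * Pel t (n + 1) -
        (if (n + 1) % 2 = t % 2 then qint (n + 1) else 0) • Pel t n)

lemma q_ne_zero : q ≠ 0 := by
  simpa [q] using RatFunc.X_ne_zero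

lemma q_pow_ne_one {n : ℕ} (hn : n ≠ 0) : q ^ n ≠ 1 := by
  rw [q, ← RatFunc.algebraMap_X (K := ℚ), ← map_pow,
    ← map_one (algebraMap (Polynomial ℚ) (RatFunc ℚ))]
  intro h
  have := RatFunc.algebraMap_injective (K := ℚ) h
  have := congrArg Polynomial.natDegree this
  simp [Polynomial.natDegree_X_pow] at this
  omega

lemma sub_q_ne : q - q⁻¹ ≠ 0 := by
  intro h
  have h2 : q ^ 2 = 1 := by
    have := sub_eq_zero.mp h
    rw [sq]; nth_rewrite 2 [this]; exact mul_inv_cancel₀ q_ne_zero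
  exact q_pow_ne_one (by norm_num) h2

lemma qint_ne_zero {n : ℕ} (hn : n ≠ 0) : qint n ≠ 0 := by
  rw [qint, div_ne_zero_iff]
  refine ⟨?_, sub_q_ne⟩
  intro h
  have h2 : q ^ (2 * n) = 1 := by
    have := sub_eq_zero.mp h
    have hq : q ^ n * q ^ n = q⁻¹ ^ n * q ^ n := by rw [this]
    rw [inv_pow, inv_mul_cancel₀ (pow_ne_zero _ q_ne_zero)] at hq
    rw [two_mul, pow_add, hq]
  exact q_pow_ne_one (by omega) h2

lemma qfact_ne_zero (n : ℕ) : qfact n ≠ 0 := by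
  induction n with
  | zero => simp [qfact]
  | succ n ih => exact mul_ne_zero ih (qint_ne_zero n.succ_ne_zero)

lemma qint_one : qint 1 = 1 := by
  rw [qint]; simp [div_self sub_q_ne]

lemma qint_zero : qint 0 = 0 := by
  simp [qint]

lemma prod_step (t m : ℕ) :
    ∏ k ∈ (Finset.range (m+1)).filter (fun k => k % 2 = t % 2),
        ((Polynomial.X : Polynomial K) ^ 2 - Polynomial.C (qint k ^ 2)) =
    (if m % 2 = t % 2 then (Polynomial.X : Polynomial K) ^ 2 - Polynomial.C (qint m ^ 2)
      else 1) *
      ∏ k ∈ (Finset.range m).filter (fun k => k % 2 = t % 2),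
        ((Polynomial.X : Polynomial K) ^ 2 - Polynomial.C (qint k ^ 2)) := by
  rw [Finset.range_add_one, Finset.filter_insert]
  split_ifs with h
  · rw [Finset.prod_insert (by simp)]
  · rw [one_mul]

lemma key (t n : ℕ) :
    Polynomial.C (qfact (n+2)) * (Polynomial.X * Pel t (n+2)) =
      Polynomial.X * (Polynomial.C (qfact (n+1)) * (Polynomial.X * Pel t (n+1))) -
      (if (n+1) % 2 = t % 2 then Polynomial.C (qint (n+1)) ^ 2 else 0) *
        (Polynomial.C (qfact n) * (Polynomial.X * Pel t n)) := by
  have hC : Polynomial.C (qint (n+2)) * Polynomial.C ((qint (n+2))⁻¹) = (1 : Polynomial K) := by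
    rw [← map_mul, mul_inv_cancel₀ (qint_ne_zero (by omega)), map_one]
  show Polynomial.C (qfact (n+1) * qint (n+2)) * _ = _
  rw [show qfact (n+1) = qfact n * qint (n+1) from rfl]
  simp only [Pel, Polynomial.smul_eq_C_mul, map_mul]
  split_ifs with h
  · linear_combination (Polynomial.C (qfact n) * Polynomial.C (qint (n+1)) * Polynomial.X *
      (Polynomial.X * Pel t (n+1) - Polynomial.C (qint (n+1)) * Pel t n)) * hC
  · simp only [map_zero]
    linear_combination (Polynomial.C (qfact n) * Polynomial.C (qint (n+1)) * Polynomial.X *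
      (Polynomial.X * Pel t (n+1))) * hC

/-- the closed formula for the ı-canonical basis: for every `n ≥ 0`,
`[n]!·B·Pₙ = B^{1+σ_t(n)}·∏_{0 ≤ k ≤ n−1, k ≡ t (mod 2)} (B² − [k]²)`, where
`1 + σ_t(n) = 1` if `n` is even, `= 0` if `n` is odd and `t = 0`, and `= 2` if `n` is odd
and `t = 1`. -/
theorem stmt10 (t : ℕ) (ht : t = 0 ∨ t = 1) (n : ℕ) :
    Polynomial.C (qfact n) * (Polynomial.X * Pel t n) =
      Polynomial.X ^ (if n % 2 = 0 then 1 else if t = 0 then 0 else 2) *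
        ∏ k ∈ (Finset.range n).filter (fun k => k % 2 = t % 2),
          (Polynomial.X ^ 2 - Polynomial.C (qint k ^ 2)) := by
  induction n using Nat.twoStepInduction with
  | zero => simp [Pel, qfact]
  | one =>
    have h1 : qfact 1 = 1 := by
      show qfact 0 * qint 1 = 1
      rw [qint_one]; simp [qfact]
    rw [h1]
    simp only [Pel, qint_one, inv_one, one_smul, map_one, one_mul]
    rcases ht with rfl | rfl
    · rw [if_neg (by norm_num), if_pos rfl, prod_step]
      simp [qint_zero]
      ring
    · rw [if_neg (by norm_num), if_neg (by norm_num), prod_step]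
      simp
      ring
  | more n ih1 ih2 =>
    rw [key, ih1, ih2]
    simp only [prod_step]
    simp only [map_pow]
    have hn2 : (n + 2) % 2 = n % 2 := by omega
    rcases ht with rfl | rfl <;>
      rcases Nat.mod_two_eq_zero_or_one n with hn | hn <;>
      (have hn1 : (n + 1) % 2 = 1 - n % 2 := by omega
       rw [hn] at hn1
       simp only [hn, hn1, hn2, Nat.sub_zero, Nat.sub_self]
       norm_num
       try ring)

end
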